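/- arXiv:2209.02621 — 2 statements merged into one kernel-verified Lean document; each statement's English description precedes it below -/
import Mathlib

section
/- The generalized incompatibility robustness of any pair of instruments is lower bounded by the generalized incompatibility robustness of their induced channels: R_I(I₁,I₂) ≥ R_C(Φ¹,Φ²), where Φ¹ = Σ_x Φ¹_x and Φ² = Σ_y Φ²_y. -/
open Matrix
open scoped Kronecker BigOperators ComplexOrder

noncomputable section

namespace QI

/-- Linear maps between matrix algebras (superoperators). -/
abbrev MatMap (n m : Type*) [Fintype n] [Fintype m] :=
  Matrix n n ℂ →ₗ[ℂ] Matrix m m ℂ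

variable {n m m₁ m₂ ι ι₁ ι₂ : Type*}

/-- The Choi matrix of a superoperator. -/
def choi [Fintype n] [DecidableEq n] [Fintype m] (Φ : MatMap n m) :
    Matrix (n × m) (n × m) ℂ :=
  Matrix.of fun p q => Φ (Matrix.single p.1 q.1 1) p.2 q.2

/-- Complete positivity, via positive semidefiniteness of the Choi matrix. -/
def IsCP [Fintype n] [DecidableEq n] [Fintype m] (Φ : MatMap n m) : Prop :=
  (choi Φ).PosSemidef

/-- Trace preserving map. -/
def IsTP [Fintype n] [Fintype m] (Φ : MatMap n m) : Prop :=
  ∀ ρ, (Φ ρ).trace = ρ.trace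

/-- Trace non-increasing map (on positive semidefinite inputs). -/
def IsTNI [Fintype n] [Fintype m] (Φ : MatMap n m) : Prop :=
  ∀ ρ : Matrix n n ℂ, ρ.PosSemidef → (Φ ρ).trace.re ≤ ρ.trace.re

/-- A quantum channel: CP and trace preserving. -/
def IsChannel [Fintype n] [DecidableEq n] [Fintype m] (Φ : MatMap n m) : Prop :=
  IsCP Φ ∧ IsTP Φ

/-- A quantum instrument: a finite family of CP maps summing to a TP map. -/
structure Instrument (ι n m : Type*) [Fintype ι] [Fintype n] [DecidableEq n] [Fintype m] where
  op : ι → MatMap n m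
  cp : ∀ x, IsCP (op x)
  tp : IsTP (∑ x, op x)

/-- Partial trace over the second tensor factor, as a linear map. -/
def ptrace₂ [Fintype m₁] [Fintype m₂] :
    Matrix (m₁ × m₂) (m₁ × m₂) ℂ →ₗ[ℂ] Matrix m₁ m₁ ℂ where
  toFun M := Matrix.of fun i j => ∑ k, M (i, k) (j, k)
  map_add' M N := by ext i j; simp [Finset.sum_add_distrib]
  map_smul' c M := by ext i j; simp [Finset.mul_sum]

/-- Partial trace over the first tensor factor, as a linear map. -/
def ptrace₁ [Fintype m₁] [Fintype m₂] :
    Matrix (m₁ × m₂) (m₁ × m₂) ℂ →ₗ[ℂ] Matrix m₂ m₂ ℂ where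
  toFun M := Matrix.of fun i j => ∑ k, M (k, i) (k, j)
  map_add' M N := by ext i j; simp [Finset.sum_add_distrib]
  map_smul' c M := by ext i j; simp [Finset.mul_sum]

/-- Parallel compatibility of two instruments. -/
def ParallelCompatible [Fintype ι₁] [Fintype ι₂] [Fintype n] [DecidableEq n]
    [Fintype m₁] [Fintype m₂]
    (I₁ : Instrument ι₁ n m₁) (I₂ : Instrument ι₂ n m₂) : Prop :=
  ∃ J : Instrument (ι₁ × ι₂) n (m₁ × m₂),
    (∀ x, ∑ y, ptrace₂ ∘ₗ J.op (x, y) = I₁.op x) ∧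
    (∀ y, ∑ x, ptrace₁ ∘ₗ J.op (x, y) = I₂.op y)

/-- The dual (Heisenberg picture) of a superoperator, characterized by
`tr[Φ(ρ) M] = tr[ρ Φ*(M)]`. -/
def dualMap [Fintype n] [DecidableEq n] [Fintype m] (Φ : MatMap n m) (M : Matrix m m ℂ) :
    Matrix n n ℂ :=
  Matrix.of fun i j => (Φ (Matrix.single j i 1) * M).trace

/-- A POVM: positive semidefinite effects summing to the identity. -/
def IsPOVM [Fintype n] [DecidableEq n] (A : ι → Matrix n n ℂ) [Fintype ι] : Prop :=
  (∀ x, (A x).PosSemidef) ∧ ∑ x, A x = 1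

/-- The POVM induced by an instrument: `A(x) = Φ_x*(𝟙)`. -/
def inducedPOVM [Fintype ι] [Fintype n] [DecidableEq n] [Fintype m] [DecidableEq m]
    (I : Instrument ι n m) (x : ι) : Matrix n n ℂ :=
  dualMap (I.op x) 1

/-- Compatibility of two POVMs via a joint POVM. -/
def POVMsCompatible [Fintype ι₁] [Fintype ι₂] [Fintype n] [DecidableEq n]
    (A₁ : ι₁ → Matrix n n ℂ) (A₂ : ι₂ → Matrix n n ℂ) : Prop :=
  ∃ G : ι₁ × ι₂ → Matrix n n ℂ, IsPOVM G ∧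
    (∀ x, ∑ y, G (x, y) = A₁ x) ∧ (∀ y, ∑ x, G (x, y) = A₂ y)

/-- Compatibility of two channels via a joint channel. -/
def ChannelsCompatible [Fintype n] [DecidableEq n] [Fintype m₁] [Fintype m₂]
    (Φ₁ : MatMap n m₁) (Φ₂ : MatMap n m₂) : Prop :=
  ∃ Λ : MatMap n (m₁ × m₂), IsChannel Λ ∧
    ptrace₂ ∘ₗ Λ = Φ₁ ∧ ptrace₁ ∘ₗ Λ = Φ₂

/-- Generalized incompatibility robustness of a pair of instruments. -/
def RI [Fintype ι₁] [Fintype ι₂] [Fintype n] [DecidableEq n]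
    [Fintype m₁] [Fintype m₂]
    (I₁ : Instrument ι₁ n m₁) (I₂ : Instrument ι₂ n m₂) : ℝ :=
  sInf {r : ℝ | 0 ≤ r ∧
    ∃ (N₁ : Instrument ι₁ n m₁) (N₂ : Instrument ι₂ n m₂)
      (J : Instrument (ι₁ × ι₂) n (m₁ × m₂)),
      (∀ x, ((1 + r : ℝ) : ℂ)⁻¹ • (I₁.op x + (r : ℂ) • N₁.op x)
          = ∑ y, ptrace₂ ∘ₗ J.op (x, y)) ∧
      (∀ y, ((1 + r : ℝ) : ℂ)⁻¹ • (I₂.op y + (r : ℂ) • N₂.op y)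
          = ∑ x, ptrace₁ ∘ₗ J.op (x, y))}

/-- Generalized incompatibility robustness of a pair of POVMs. -/
def RM [Fintype ι₁] [Fintype ι₂] [Fintype n] [DecidableEq n]
    (A₁ : ι₁ → Matrix n n ℂ) (A₂ : ι₂ → Matrix n n ℂ) : ℝ :=
  sInf {r : ℝ | 0 ≤ r ∧
    ∃ (B₁ : ι₁ → Matrix n n ℂ) (B₂ : ι₂ → Matrix n n ℂ) (G : ι₁ × ι₂ → Matrix n n ℂ),
      IsPOVM B₁ ∧ IsPOVM B₂ ∧ (∀ p, (G p).PosSemidef) ∧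
      (∀ x, ((1 + r : ℝ) : ℂ)⁻¹ • (A₁ x + (r : ℂ) • B₁ x) = ∑ y, G (x, y)) ∧
      (∀ y, ((1 + r : ℝ) : ℂ)⁻¹ • (A₂ y + (r : ℂ) • B₂ y) = ∑ x, G (x, y))}

/-- Generalized incompatibility robustness of a pair of channels. -/
def RC [Fintype n] [DecidableEq n] [Fintype m₁] [Fintype m₂]
    (Φ₁ : MatMap n m₁) (Φ₂ : MatMap n m₂) : ℝ :=
  sInf {r : ℝ | 0 ≤ r ∧
    ∃ (N₁ : MatMap n m₁) (N₂ : MatMap n m₂) (Λ : MatMap n (m₁ × m₂)),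
      IsChannel N₁ ∧ IsChannel N₂ ∧ IsChannel Λ ∧
      ((1 + r : ℝ) : ℂ)⁻¹ • (Φ₁ + (r : ℂ) • N₁) = ptrace₂ ∘ₗ Λ ∧
      ((1 + r : ℝ) : ℂ)⁻¹ • (Φ₂ + (r : ℂ) • N₂) = ptrace₁ ∘ₗ Λ}

/-- Post-processing relation on instruments: `I₂ ≲ I₁`. -/
def PostProcessingOf [Fintype ι₁] [Fintype ι₂] [Fintype n] [DecidableEq n]
    [Fintype m₁] [DecidableEq m₁] [Fintype m₂]
    (I₂ : Instrument ι₂ n m₂) (I₁ : Instrument ι₁ n m₁) : Prop :=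
  ∃ R : ι₁ → Instrument ι₂ m₁ m₂,
    ∀ y, I₂.op y = ∑ x, (R x).op y ∘ₗ I₁.op x

/-- A density matrix (quantum state). -/
def IsState [Fintype m] (η : Matrix m m ℂ) : Prop :=
  η.PosSemidef ∧ η.trace = 1

/-- A pure state. -/
def IsPureState [Fintype m] (η : Matrix m m ℂ) : Prop :=
  ∃ v : m → ℂ, (∑ i, star (v i) * v i) = 1 ∧ η = Matrix.vecMulVec v (star v)

/-- The trash-and-prepare map `ρ ↦ tr(ρ) • η`. -/
def trashPrep [Fintype n] [Fintype m] (η : Matrix m m ℂ) : MatMap n m :=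
  (Matrix.traceLinearMap n ℂ ℂ).smulRight η

/-- Tensoring with a fixed matrix on the right, as a linear map. -/
def kronRight [Fintype m₁] [Fintype m₂] (B : Matrix m₂ m₂ ℂ) :
    Matrix m₁ m₁ ℂ →ₗ[ℂ] Matrix (m₁ × m₂) (m₁ × m₂) ℂ where
  toFun A := A ⊗ₖ B
  map_add' A A' := by ext ⟨i, k⟩ ⟨j, l⟩; simp [Matrix.kroneckerMap_apply, add_mul]
  map_smul' c A := by ext ⟨i, k⟩ ⟨j, l⟩; simp [Matrix.kroneckerMap_apply, mul_assoc]

/-- Tensoring with a fixed matrix on the left, as a linear map. -/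
def kronLeft [Fintype m₁] [Fintype m₂] (A : Matrix m₁ m₁ ℂ) :
    Matrix m₂ m₂ ℂ →ₗ[ℂ] Matrix (m₁ × m₂) (m₁ × m₂) ℂ where
  toFun B := A ⊗ₖ B
  map_add' B B' := by ext ⟨i, k⟩ ⟨j, l⟩; simp [Matrix.kroneckerMap_apply, mul_add]
  map_smul' c B := by
    ext ⟨i, k⟩ ⟨j, l⟩
    simp only [Matrix.kroneckerMap_apply, Matrix.smul_apply, smul_eq_mul, RingHom.id_apply]
    ring

/-- Measure-and-prepare operation: `ρ ↦ tr(ρ A) • σ`. -/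
def mpOp [Fintype n] [Fintype m] (A : Matrix n n ℂ) (σ : Matrix m m ℂ) : MatMap n m where
  toFun ρ := (ρ * A).trace • σ
  map_add' ρ ρ' := by simp [Matrix.add_mul, Matrix.trace_add, add_smul]
  map_smul' c ρ := by simp [Matrix.smul_mul, Matrix.trace_smul, smul_smul]

/-- Conjugation by a Kraus operator: `ρ ↦ K ρ K†`. -/
def krausOp [Fintype n] [Fintype m] (K : Matrix m n ℂ) : MatMap n m where
  toFun ρ := K * ρ * Kᴴ
  map_add' ρ ρ' := by simp [Matrix.mul_add, Matrix.add_mul]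
  map_smul' c ρ := by simp [Matrix.mul_smul, Matrix.smul_mul]

end QI

end

/-!
Summing a parallel joint instrument over both outcomes gives a joint channel whose marginals are
the induced channels mixed with the summed noise instruments, so every noise level admissible for
the instruments is admissible for their induced channels. Comparing the infima also needs some
admissible level for the instruments (`sInf ∅ = 0`): level `1` is one, with trash-and-prepare noise
`ρ ↦ tr(ρ) τᵢ(x)` realised by the joint instrument `½ (Φ¹ₓ ⊗ τ₂(y) + τ₁(x) ⊗ Φ²_y)`.
-/

noncomputable section

namespace QI

variable {ι ι₁ ι₂ n m m₁ m₂ : Type*}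

section CompletePositivity

variable [Fintype n] [DecidableEq n] [Fintype m]

lemma choi_zero : choi (0 : MatMap n m) = 0 := by
  ext; simp [choi]

lemma choi_add (Φ Ψ : MatMap n m) : choi (Φ + Ψ) = choi Φ + choi Ψ := by
  ext; simp [choi]

lemma choi_smul (c : ℂ) (Φ : MatMap n m) : choi (c • Φ) = c • choi Φ := by
  ext; simp [choi]

lemma isCP_zero : IsCP (0 : MatMap n m) := by
  rw [IsCP, choi_zero]; exact .zero

lemma IsCP.add {Φ Ψ : MatMap n m} (hΦ : IsCP Φ) (hΨ : IsCP Ψ) : IsCP (Φ + Ψ) := by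
  rw [IsCP, choi_add]; exact PosSemidef.add hΦ hΨ

lemma IsCP.smul {Φ : MatMap n m} (hΦ : IsCP Φ) {c : ℂ} (hc : 0 ≤ c) : IsCP (c • Φ) := by
  rw [IsCP, choi_smul]; exact PosSemidef.smul hΦ hc

lemma isCP_sum [Fintype ι] {Φ : ι → MatMap n m} (hΦ : ∀ x, IsCP (Φ x)) : IsCP (∑ x, Φ x) :=
  Finset.sum_induction Φ IsCP (fun _ _ => IsCP.add) isCP_zero fun x _ => hΦ x

lemma choi_trashPrep (η : Matrix m m ℂ) : choi (trashPrep η : MatMap n m) = 1 ⊗ₖ η := by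
  ext ⟨i, k⟩ ⟨j, l⟩
  rcases eq_or_ne i j with rfl | hij
  · simp [choi, trashPrep, trace_single_eq_same]
  · simp [choi, trashPrep, trace_single_eq_of_ne _ _ _ hij, one_apply_ne hij]

lemma isCP_trashPrep {η : Matrix m m ℂ} (hη : η.PosSemidef) : IsCP (trashPrep η : MatMap n m) := by
  rw [IsCP, choi_trashPrep]; exact PosSemidef.one.kronecker hη

end CompletePositivity

section Kronecker

variable [Fintype m₁] [Fintype m₂]

@[simp] lemma kronRight_apply (B : Matrix m₂ m₂ ℂ) (A : Matrix m₁ m₁ ℂ) :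
    kronRight B A = A ⊗ₖ B := rfl

@[simp] lemma kronLeft_apply (A : Matrix m₁ m₁ ℂ) (B : Matrix m₂ m₂ ℂ) :
    kronLeft A B = A ⊗ₖ B := rfl

lemma ptrace₂_kronecker (A : Matrix m₁ m₁ ℂ) (B : Matrix m₂ m₂ ℂ) :
    ptrace₂ (A ⊗ₖ B) = B.trace • A := by
  ext; simp [ptrace₂, trace, kroneckerMap_apply, Finset.mul_sum, mul_comm]

lemma ptrace₁_kronecker (A : Matrix m₁ m₁ ℂ) (B : Matrix m₂ m₂ ℂ) :
    ptrace₁ (A ⊗ₖ B) = A.trace • B := by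
  ext; simp [ptrace₁, trace, kroneckerMap_apply, Finset.sum_mul]

variable [Fintype n] [DecidableEq n]

lemma IsCP.kronRight_comp {Φ : MatMap n m₁} (hΦ : IsCP Φ) {B : Matrix m₂ m₂ ℂ}
    (hB : B.PosSemidef) : IsCP (kronRight B ∘ₗ Φ) := by
  have : choi (kronRight B ∘ₗ Φ) = (choi Φ ⊗ₖ B).submatrix (Equiv.prodAssoc n m₁ m₂).symm
      (Equiv.prodAssoc n m₁ m₂).symm := by
    ext ⟨i, k, l⟩ ⟨j, k', l'⟩; simp [choi, kroneckerMap_apply]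
  rw [IsCP, this]; exact (hΦ.kronecker hB).submatrix _

lemma IsCP.kronLeft_comp {Φ : MatMap n m₂} (hΦ : IsCP Φ) {A : Matrix m₁ m₁ ℂ}
    (hA : A.PosSemidef) : IsCP (kronLeft A ∘ₗ Φ) := by
  have : choi (kronLeft A ∘ₗ Φ) = (A ⊗ₖ choi Φ).submatrix (fun p => (p.2.1, p.1, p.2.2))
      (fun p => (p.2.1, p.1, p.2.2)) := by
    ext ⟨i, k, l⟩ ⟨j, k', l'⟩; simp [choi, kroneckerMap_apply]
  rw [IsCP, this]; exact (hA.kronecker hΦ).submatrix _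

end Kronecker

namespace Instrument

variable [Fintype ι] [Fintype n] [DecidableEq n] [Fintype m]

lemma sum_trace_op_apply (I : Instrument ι n m) (ρ : Matrix n n ℂ) :
    ∑ x, (I.op x ρ).trace = ρ.trace := by
  rw [← I.tp ρ, LinearMap.sum_apply, trace_sum]

lemma isChannel_sum (I : Instrument ι n m) : IsChannel (∑ x, I.op x) := ⟨isCP_sum I.cp, I.tp⟩

lemma nonempty_index [Nonempty n] (I : Instrument ι n m) : Nonempty ι := by
  by_contra h
  rw [not_nonempty_iff] at h
  simpa [eq_comm] using I.sum_trace_op_apply 1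

lemma nonempty_output [Nonempty n] (I : Instrument ι n m) : Nonempty m := by
  by_contra h
  rw [not_nonempty_iff] at h
  simpa [eq_comm] using I.sum_trace_op_apply 1

end Instrument

def IsEnsemble [Fintype ι] [Fintype m] (τ : ι → Matrix m m ℂ) : Prop :=
  (∀ x, (τ x).PosSemidef) ∧ ∑ x, (τ x).trace = 1

lemma exists_isEnsemble [Fintype ι] [Nonempty ι] [Fintype m] [DecidableEq m] [Nonempty m] :
    ∃ τ : ι → Matrix m m ℂ, IsEnsemble τ := by
  refine ⟨fun _ => ((Fintype.card ι * Fintype.card m : ℕ) : ℂ)⁻¹ • 1,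
    fun _ => PosSemidef.one.smul (inv_nonneg.mpr (Nat.cast_nonneg _)), ?_⟩
  simp only [trace_smul, trace_one, Finset.sum_const, Finset.card_univ, nsmul_eq_mul, smul_eq_mul]
  push_cast
  field_simp

section TrashAndPrepare

variable [Fintype n] [DecidableEq n] [Fintype ι₁] [Fintype ι₂] [Fintype m₁] [Fintype m₂]
  {τ₁ : ι₁ → Matrix m₁ m₁ ℂ} {τ₂ : ι₂ → Matrix m₂ m₂ ℂ}

def trashPrepInstrument (hτ : IsEnsemble τ₁) : Instrument ι₁ n m₁ where
  op x := trashPrep (τ₁ x)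
  cp x := isCP_trashPrep (hτ.1 x)
  tp ρ := by
    simp [trashPrep, LinearMap.sum_apply, trace_sum, trace_smul, ← Finset.mul_sum, hτ.2]

@[simps]
def jointInstrument (I₁ : Instrument ι₁ n m₁) (I₂ : Instrument ι₂ n m₂)
    (hτ₁ : IsEnsemble τ₁) (hτ₂ : IsEnsemble τ₂) : Instrument (ι₁ × ι₂) n (m₁ × m₂) where
  op p := (2⁻¹ : ℂ) • (kronRight (τ₂ p.2) ∘ₗ I₁.op p.1 + kronLeft (τ₁ p.1) ∘ₗ I₂.op p.2)
  cp p := (((I₁.cp p.1).kronRight_comp (hτ₂.1 p.2)).add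
    ((I₂.cp p.2).kronLeft_comp (hτ₁.1 p.1))).smul (inv_nonneg.mpr zero_le_two)
  tp ρ := by
    simp only [LinearMap.sum_apply, LinearMap.smul_apply, LinearMap.add_apply,
      LinearMap.comp_apply, kronRight_apply, kronLeft_apply, trace_sum, trace_smul, trace_add,
      trace_kronecker, smul_eq_mul, smul_add, Finset.sum_add_distrib, Fintype.sum_prod_type,
      ← Finset.mul_sum, ← Finset.sum_mul, hτ₁.2, hτ₂.2, mul_one, one_mul,
      Instrument.sum_trace_op_apply]
    ring

lemma sum_ptrace₂_jointInstrument (I₁ : Instrument ι₁ n m₁) (I₂ : Instrument ι₂ n m₂)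
    (hτ₁ : IsEnsemble τ₁) (hτ₂ : IsEnsemble τ₂) (x : ι₁) :
    ∑ y, ptrace₂ ∘ₗ (jointInstrument I₁ I₂ hτ₁ hτ₂).op (x, y)
      = (2⁻¹ : ℂ) • (I₁.op x + (trashPrepInstrument hτ₁).op x) := by
  ext1 ρ
  simp only [LinearMap.sum_apply, LinearMap.comp_apply, jointInstrument_op, LinearMap.smul_apply,
    LinearMap.add_apply, kronRight_apply, kronLeft_apply, map_smul, map_add, ptrace₂_kronecker]
  rw [← Finset.smul_sum, Finset.sum_add_distrib, ← Finset.sum_smul, ← Finset.sum_smul, hτ₂.2,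
    I₂.sum_trace_op_apply, one_smul]
  rfl

lemma sum_ptrace₁_jointInstrument (I₁ : Instrument ι₁ n m₁) (I₂ : Instrument ι₂ n m₂)
    (hτ₁ : IsEnsemble τ₁) (hτ₂ : IsEnsemble τ₂) (y : ι₂) :
    ∑ x, ptrace₁ ∘ₗ (jointInstrument I₁ I₂ hτ₁ hτ₂).op (x, y)
      = (2⁻¹ : ℂ) • (I₂.op y + (trashPrepInstrument hτ₂).op y) := by
  ext1 ρ
  simp only [LinearMap.sum_apply, LinearMap.comp_apply, jointInstrument_op, LinearMap.smul_apply,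
    LinearMap.add_apply, kronRight_apply, kronLeft_apply, map_smul, map_add, ptrace₁_kronecker]
  rw [← Finset.smul_sum, Finset.sum_add_distrib, ← Finset.sum_smul, ← Finset.sum_smul, hτ₁.2,
    I₁.sum_trace_op_apply, one_smul, add_comm]
  rfl

end TrashAndPrepare

section Robustness

variable [Fintype n] [DecidableEq n] [Fintype m₁] [Fintype m₂]

def rcFeasible (Φ₁ : MatMap n m₁) (Φ₂ : MatMap n m₂) : Set ℝ :=
  {r : ℝ | 0 ≤ r ∧
    ∃ (N₁ : MatMap n m₁) (N₂ : MatMap n m₂) (Λ : MatMap n (m₁ × m₂)),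
      IsChannel N₁ ∧ IsChannel N₂ ∧ IsChannel Λ ∧
      ((1 + r : ℝ) : ℂ)⁻¹ • (Φ₁ + (r : ℂ) • N₁) = ptrace₂ ∘ₗ Λ ∧
      ((1 + r : ℝ) : ℂ)⁻¹ • (Φ₂ + (r : ℂ) • N₂) = ptrace₁ ∘ₗ Λ}

lemma RC_eq_sInf_rcFeasible (Φ₁ : MatMap n m₁) (Φ₂ : MatMap n m₂) :
    RC Φ₁ Φ₂ = sInf (rcFeasible Φ₁ Φ₂) := rfl

lemma rcFeasible_bddBelow (Φ₁ : MatMap n m₁) (Φ₂ : MatMap n m₂) :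
    BddBelow (rcFeasible Φ₁ Φ₂) :=
  ⟨0, fun _ hr => hr.1⟩

variable [Fintype ι₁] [Fintype ι₂]

def riFeasible (I₁ : Instrument ι₁ n m₁) (I₂ : Instrument ι₂ n m₂) : Set ℝ :=
  {r : ℝ | 0 ≤ r ∧
    ∃ (N₁ : Instrument ι₁ n m₁) (N₂ : Instrument ι₂ n m₂)
      (J : Instrument (ι₁ × ι₂) n (m₁ × m₂)),
      (∀ x, ((1 + r : ℝ) : ℂ)⁻¹ • (I₁.op x + (r : ℂ) • N₁.op x)
          = ∑ y, ptrace₂ ∘ₗ J.op (x, y)) ∧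
      (∀ y, ((1 + r : ℝ) : ℂ)⁻¹ • (I₂.op y + (r : ℂ) • N₂.op y)
          = ∑ x, ptrace₁ ∘ₗ J.op (x, y))}

lemma RI_eq_sInf_riFeasible (I₁ : Instrument ι₁ n m₁) (I₂ : Instrument ι₂ n m₂) :
    RI I₁ I₂ = sInf (riFeasible I₁ I₂) := rfl

lemma one_mem_riFeasible [Nonempty n] (I₁ : Instrument ι₁ n m₁) (I₂ : Instrument ι₂ n m₂) :
    1 ∈ riFeasible I₁ I₂ := by
  classical
  have := I₁.nonempty_index; have := I₁.nonempty_output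
  have := I₂.nonempty_index; have := I₂.nonempty_output
  obtain ⟨τ₁, hτ₁⟩ := exists_isEnsemble (ι := ι₁) (m := m₁)
  obtain ⟨τ₂, hτ₂⟩ := exists_isEnsemble (ι := ι₂) (m := m₂)
  refine ⟨zero_le_one, trashPrepInstrument hτ₁, trashPrepInstrument hτ₂,
    jointInstrument I₁ I₂ hτ₁ hτ₂, fun x => ?_, fun y => ?_⟩
  · rw [sum_ptrace₂_jointInstrument]; norm_num
  · rw [sum_ptrace₁_jointInstrument]; norm_num

lemma riFeasible_nonempty (I₁ : Instrument ι₁ n m₁) (I₂ : Instrument ι₂ n m₂) :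
    (riFeasible I₁ I₂).Nonempty := by
  rcases isEmpty_or_nonempty n with hn | hn
  · exact ⟨0, le_rfl, I₁, I₂, ⟨0, fun _ => isCP_zero, fun ρ => by simp⟩,
      fun _ => Subsingleton.elim _ _, fun _ => Subsingleton.elim _ _⟩
  · exact ⟨1, one_mem_riFeasible I₁ I₂⟩

lemma riFeasible_subset_rcFeasible (I₁ : Instrument ι₁ n m₁) (I₂ : Instrument ι₂ n m₂) :
    riFeasible I₁ I₂ ⊆ rcFeasible (∑ x, I₁.op x) (∑ y, I₂.op y) := by
  rintro r ⟨hr, N₁, N₂, J, h₁, h₂⟩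
  refine ⟨hr, ∑ x, N₁.op x, ∑ y, N₂.op y, ∑ p, J.op p, N₁.isChannel_sum, N₂.isChannel_sum,
    J.isChannel_sum, ?_, ?_⟩
  · change _ = LinearMap.compRight ℂ ptrace₂ (∑ p, J.op p)
    simp only [map_sum, LinearMap.compRight_apply, Fintype.sum_prod_type, ← h₁,
      Finset.smul_sum, smul_add, Finset.sum_add_distrib]
  · change _ = LinearMap.compRight ℂ ptrace₁ (∑ p, J.op p)
    simp only [map_sum, LinearMap.compRight_apply, Fintype.sum_prod_type_right, ← h₂,
      Finset.smul_sum, smul_add, Finset.sum_add_distrib]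

end Robustness

end QI

end

open QI in
/-- `R_I(I₁,I₂) ≥ R_C(Φ¹,Φ²)` for the induced channels. -/
theorem RI_ge_RC {ι₁ ι₂ n m₁ m₂ : Type*}
    [Fintype ι₁] [Fintype ι₂] [Fintype n] [DecidableEq n] [Fintype m₁] [Fintype m₂]
    (I₁ : Instrument ι₁ n m₁) (I₂ : Instrument ι₂ n m₂) :
    RC (∑ x, I₁.op x) (∑ y, I₂.op y) ≤ RI I₁ I₂ := by
  rw [RC_eq_sInf_rcFeasible, RI_eq_sInf_riFeasible]
  exact csInf_le_csInf (rcFeasible_bddBelow _ _) (riFeasible_nonempty I₁ I₂)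
    (riFeasible_subset_rcFeasible I₁ I₂)
end

section
/- For special measure-and-prepare instruments, the instrument incompatibility robustness equals the measurement incompatibility robustness of the underlying POVMs: R_I(𝔍_{A₁}, 𝔍_{A₂}) = R_M(A₁, A₂). -/
open Matrix
open scoped Kronecker BigOperators ComplexOrder

noncomputable section

namespace QI

variable {n m m₁ m₂ ι ι₁ ι₂ : Type*}

/-!
Passing to induced POVMs `Φ ↦ Φ*(𝟙)` is linear and unchanged by partial traces (which preserve
the trace), so a joint instrument for the noisy versions of `𝔍_{A₁}, 𝔍_{A₂}` induces a joint POVM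
for the noisy versions of `A₁, A₂`, the induced POVM of `𝔍_A` being `A`. Conversely, a joint POVM
`G` for the noisy POVMs gives the joint instrument `𝔍_G : ρ ↦ tr[ρ G(x,y)] |x⟩⟨x| ⊗ |y⟩⟨y|`,
whose marginals are the noisy measure-and-prepare instruments. Hence both robustness infima are
taken over the same set of weights `r`.
-/

section MeasurePrepare

variable [Fintype n] [Fintype m]

lemma mpOp_apply (A : Matrix n n ℂ) (σ : Matrix m m ℂ) (ρ : Matrix n n ℂ) :
    mpOp A σ ρ = (ρ * A).trace • σ := rfl

lemma mpOp_add_left (A B : Matrix n n ℂ) (σ : Matrix m m ℂ) :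
    mpOp (A + B) σ = mpOp A σ + mpOp B σ :=
  LinearMap.ext fun ρ => by simp [mpOp_apply, Matrix.mul_add, add_smul]

lemma mpOp_smul_left (c : ℂ) (A : Matrix n n ℂ) (σ : Matrix m m ℂ) :
    mpOp (c • A) σ = c • mpOp A σ :=
  LinearMap.ext fun ρ => by simp [mpOp_apply, smul_smul]

lemma mpOp_sum_left {κ : Type*} (s : Finset κ) (A : κ → Matrix n n ℂ) (σ : Matrix m m ℂ) :
    mpOp (∑ k ∈ s, A k) σ = ∑ k ∈ s, mpOp (A k) σ :=
  LinearMap.ext fun ρ => by simp [mpOp_apply, Matrix.mul_sum, Matrix.trace_sum, Finset.sum_smul]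

lemma smul_add_mpOp (c r : ℂ) (A B : Matrix n n ℂ) (σ : Matrix m m ℂ) :
    c • (mpOp A σ + r • mpOp B σ) = mpOp (c • (A + r • B)) σ := by
  rw [mpOp_smul_left, mpOp_add_left, mpOp_smul_left]

lemma comp_mpOp {m' : Type*} [Fintype m'] (Ψ : MatMap m m') (A : Matrix n n ℂ)
    (σ : Matrix m m ℂ) : Ψ ∘ₗ mpOp A σ = mpOp A (Ψ σ) :=
  LinearMap.ext fun ρ => by simp [mpOp_apply]

lemma choi_mpOp [DecidableEq n] (A : Matrix n n ℂ) (σ : Matrix m m ℂ) :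
    choi (mpOp A σ) = Aᵀ ⊗ₖ σ := by
  ext ⟨i, k⟩ ⟨j, l⟩
  simp [choi, mpOp_apply, trace_single_mul]

lemma isCP_mpOp [DecidableEq n] [DecidableEq m] {A : Matrix n n ℂ} {σ : Matrix m m ℂ}
    (hA : A.PosSemidef) (hσ : σ.PosSemidef) : IsCP (mpOp A σ) := by
  rw [IsCP, choi_mpOp]
  exact hA.transpose.kronecker hσ

lemma isTP_sum_mpOp [DecidableEq n] [Fintype ι] {A : ι → Matrix n n ℂ} {σ : ι → Matrix m m ℂ}
    (hA : ∑ x, A x = 1) (hσ : ∀ x, (σ x).trace = 1) : IsTP (∑ x, mpOp (A x) (σ x)) := by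
  intro ρ
  simp only [LinearMap.sum_apply, mpOp_apply, Matrix.trace_sum, Matrix.trace_smul, hσ,
    smul_eq_mul, mul_one]
  rw [← Matrix.trace_sum, ← Matrix.mul_sum, hA, Matrix.mul_one]

end MeasurePrepare

lemma posSemidef_single_self [DecidableEq ι] (x : ι) : (Matrix.single x x (1 : ℂ)).PosSemidef :=
  diagonal_single x (1 : ℂ) ▸ PosSemidef.diagonal (Pi.single_nonneg.2 zero_le_one)

/-- The special measure-and-prepare instrument `𝔍_A`. -/
def measurePrepare [Fintype ι] [DecidableEq ι] [Fintype n] [DecidableEq n]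
    (A : ι → Matrix n n ℂ) (hA : IsPOVM A) : Instrument ι n ι where
  op x := mpOp (A x) (Matrix.single x x 1)
  cp x := isCP_mpOp (hA.1 x) (posSemidef_single_self x)
  tp := isTP_sum_mpOp hA.2 fun x => trace_single_eq_same x 1

section PartialTrace

variable [Fintype m₁] [Fintype m₂]

lemma ptrace₂_single [DecidableEq m₁] [DecidableEq m₂] (i j : m₁) (k : m₂) (c : ℂ) :
    ptrace₂ (Matrix.single (i, k) (j, k) c) = Matrix.single i j c := by
  ext a b
  simp [ptrace₂, Matrix.single, ite_and]

lemma ptrace₁_single [DecidableEq m₁] [DecidableEq m₂] (i : m₁) (k l : m₂) (c : ℂ) :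
    ptrace₁ (Matrix.single (i, k) (i, l) c) = Matrix.single k l c := by
  ext a b
  simp [ptrace₁, Matrix.single, ite_and]

lemma isTP_ptrace₂ : IsTP (ptrace₂ : MatMap (m₁ × m₂) m₁) := fun M => by
  simp [ptrace₂, Matrix.trace, Fintype.sum_prod_type]

lemma isTP_ptrace₁ : IsTP (ptrace₁ : MatMap (m₁ × m₂) m₂) := fun M => by
  simp [ptrace₁, Matrix.trace, Fintype.sum_prod_type_right]

lemma ptrace₂_eq_sum_submatrix (M : Matrix (m₁ × m₂) (m₁ × m₂) ℂ) :
    ptrace₂ M = ∑ k, M.submatrix (·, k) (·, k) := by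
  ext i j
  simp [ptrace₂, Matrix.sum_apply]

lemma posSemidef_ptrace₂ {M : Matrix (m₁ × m₂) (m₁ × m₂) ℂ} (hM : M.PosSemidef) :
    (ptrace₂ M).PosSemidef := by
  rw [ptrace₂_eq_sum_submatrix]
  exact posSemidef_sum _ fun k _ => hM.submatrix _

end PartialTrace

section DualMap

variable [Fintype n] [DecidableEq n] [Fintype m]

lemma dualMap_add (Φ Ψ : MatMap n m) (M : Matrix m m ℂ) :
    dualMap (Φ + Ψ) M = dualMap Φ M + dualMap Ψ M := by
  ext i j
  simp [dualMap, Matrix.add_mul]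

lemma dualMap_smul (c : ℂ) (Φ : MatMap n m) (M : Matrix m m ℂ) :
    dualMap (c • Φ) M = c • dualMap Φ M := by
  ext i j
  simp [dualMap]

lemma dualMap_sum {κ : Type*} (s : Finset κ) (Φ : κ → MatMap n m) (M : Matrix m m ℂ) :
    dualMap (∑ k ∈ s, Φ k) M = ∑ k ∈ s, dualMap (Φ k) M := by
  ext i j
  simp [dualMap, Matrix.sum_mul, Matrix.trace_sum, Matrix.sum_apply]

variable [DecidableEq m]

lemma dualMap_comp_one_of_isTP {m' : Type*} [Fintype m'] [DecidableEq m'] {Ψ : MatMap m m'}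
    (hΨ : IsTP Ψ) (Φ : MatMap n m) :
    dualMap (Ψ ∘ₗ Φ) 1 = dualMap Φ 1 := by
  ext i j
  simpa [dualMap] using hΨ _

lemma dualMap_mpOp_one (A : Matrix n n ℂ) (σ : Matrix m m ℂ) :
    dualMap (mpOp A σ) 1 = σ.trace • A := by
  ext i j
  simp [dualMap, mpOp_apply, trace_single_mul, mul_comm]

lemma dualMap_one_eq_transpose_ptrace₂_choi (Φ : MatMap n m) :
    dualMap Φ 1 = (ptrace₂ (choi Φ))ᵀ := by
  ext i j
  simp [dualMap, choi, ptrace₂, Matrix.trace]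

lemma posSemidef_dualMap_one {Φ : MatMap n m} (hΦ : IsCP Φ) : (dualMap Φ 1).PosSemidef := by
  rw [dualMap_one_eq_transpose_ptrace₂_choi]
  exact (posSemidef_ptrace₂ hΦ).transpose

lemma dualMap_one_of_isTP {Φ : MatMap n m} (hΦ : IsTP Φ) : dualMap Φ 1 = 1 := by
  ext i j
  simp only [dualMap, Matrix.of_apply, Matrix.mul_one, hΦ _]
  rcases eq_or_ne i j with rfl | h
  · simp
  · simp [Matrix.one_apply_ne h, Ne.symm h]

end DualMap

section InducedPOVM

variable [Fintype n] [DecidableEq n]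

lemma isPOVM_inducedPOVM [Fintype ι] [Fintype m] [DecidableEq m] (I : Instrument ι n m) :
    IsPOVM (inducedPOVM I) :=
  ⟨fun x => posSemidef_dualMap_one (I.cp x), by
    simp only [inducedPOVM, ← dualMap_sum, dualMap_one_of_isTP I.tp]⟩

lemma inducedPOVM_eq_of_op_eq_mpOp [Fintype ι] [DecidableEq ι] {I : Instrument ι n ι}
    {A : ι → Matrix n n ℂ} (hI : ∀ x, I.op x = mpOp (A x) (Matrix.single x x 1)) :
    inducedPOVM I = A :=
  funext fun x => by rw [inducedPOVM, hI, dualMap_mpOp_one, trace_single_eq_same, one_smul]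

variable [Fintype ι₁] [Fintype ι₂] [Fintype m₁] [DecidableEq m₁] [Fintype m₂] [DecidableEq m₂]
  {J : Instrument (ι₁ × ι₂) n (m₁ × m₂)} {c r : ℂ}

lemma smul_add_inducedPOVM_eq_sum_fst {I N : Instrument ι₁ n m₁} {x : ι₁}
    (h : c • (I.op x + r • N.op x) = ∑ y, ptrace₂ ∘ₗ J.op (x, y)) :
    c • (inducedPOVM I x + r • inducedPOVM N x) = ∑ y, inducedPOVM J (x, y) := by
  simpa [inducedPOVM, dualMap_add, dualMap_smul, dualMap_sum,
    dualMap_comp_one_of_isTP isTP_ptrace₂] using congrArg (dualMap · 1) h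

lemma smul_add_inducedPOVM_eq_sum_snd {I N : Instrument ι₂ n m₂} {y : ι₂}
    (h : c • (I.op y + r • N.op y) = ∑ x, ptrace₁ ∘ₗ J.op (x, y)) :
    c • (inducedPOVM I y + r • inducedPOVM N y) = ∑ x, inducedPOVM J (x, y) := by
  simpa [inducedPOVM, dualMap_add, dualMap_smul, dualMap_sum,
    dualMap_comp_one_of_isTP isTP_ptrace₁] using congrArg (dualMap · 1) h

end InducedPOVM

section JointMeasurePrepare

variable [Fintype n] [DecidableEq n] [Fintype ι₁] [DecidableEq ι₁] [Fintype ι₂] [DecidableEq ι₂]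
  (G : ι₁ × ι₂ → Matrix n n ℂ) (hG : IsPOVM G)

lemma sum_ptrace₂_comp_measurePrepare (x : ι₁) :
    ∑ y, ptrace₂ ∘ₗ (measurePrepare G hG).op (x, y) =
      mpOp (∑ y, G (x, y)) (Matrix.single x x 1) := by
  simp [measurePrepare, comp_mpOp, ptrace₂_single, mpOp_sum_left]

lemma sum_ptrace₁_comp_measurePrepare (y : ι₂) :
    ∑ x, ptrace₁ ∘ₗ (measurePrepare G hG).op (x, y) =
      mpOp (∑ x, G (x, y)) (Matrix.single y y 1) := by
  simp [measurePrepare, comp_mpOp, ptrace₁_single, mpOp_sum_left]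

end JointMeasurePrepare

lemma sum_smul_add_eq_one [Fintype n] [DecidableEq n] [Fintype ι] {A B : ι → Matrix n n ℂ}
    (hA : ∑ x, A x = 1) (hB : ∑ x, B x = 1) {r : ℝ} (hr : 1 + r ≠ 0) :
    ∑ x, ((1 + r : ℝ) : ℂ)⁻¹ • (A x + (r : ℂ) • B x) = 1 := by
  rw [← Finset.smul_sum, Finset.sum_add_distrib, ← Finset.smul_sum, hA, hB,
    inv_smul_eq_iff₀ (Complex.ofReal_ne_zero.mpr hr)]
  push_cast
  rw [add_smul, one_smul]

end QI

end

open QI in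
theorem RI_eq_RM_special_measure_prepare_general {ι₁ ι₂ n : Type*}
    [Fintype ι₁] [DecidableEq ι₁] [Fintype ι₂] [DecidableEq ι₂]
    [Fintype n] [DecidableEq n]
    (A₁ : ι₁ → Matrix n n ℂ) (A₂ : ι₂ → Matrix n n ℂ)
    (S₁ : Instrument ι₁ n ι₁)
    (hS₁ : ∀ x, S₁.op x = mpOp (A₁ x) (Matrix.single x x 1))
    (S₂ : Instrument ι₂ n ι₂)
    (hS₂ : ∀ y, S₂.op y = mpOp (A₂ y) (Matrix.single y y 1)) :
    RI S₁ S₂ = RM A₁ A₂ := by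
  have hA₁ := inducedPOVM_eq_of_op_eq_mpOp hS₁
  have hA₂ := inducedPOVM_eq_of_op_eq_mpOp hS₂
  unfold RI RM
  congr 1
  ext r
  constructor
  · rintro ⟨hr, N₁, N₂, J, h₁, h₂⟩
    refine ⟨hr, _, _, _, isPOVM_inducedPOVM N₁, isPOVM_inducedPOVM N₂,
      (isPOVM_inducedPOVM J).1, fun x => ?_, fun y => ?_⟩
    · simpa [hA₁] using smul_add_inducedPOVM_eq_sum_fst (h₁ x)
    · simpa [hA₂] using smul_add_inducedPOVM_eq_sum_snd (h₂ y)
  · rintro ⟨hr, B₁, B₂, G, hB₁, hB₂, hG, h₁, h₂⟩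
    have hGPOVM : IsPOVM G := by
      refine ⟨hG, ?_⟩
      rw [Fintype.sum_prod_type, ← Finset.sum_congr rfl fun x _ => h₁ x]
      exact sum_smul_add_eq_one (hA₁ ▸ (isPOVM_inducedPOVM S₁).2) hB₁.2 (by linarith)
    refine ⟨hr, measurePrepare B₁ hB₁, measurePrepare B₂ hB₂, measurePrepare G hGPOVM,
      fun x => ?_, fun y => ?_⟩
    · rw [sum_ptrace₂_comp_measurePrepare, ← h₁ x, hS₁ x]
      exact smul_add_mpOp _ _ _ _ _
    · rw [sum_ptrace₁_comp_measurePrepare, ← h₂ y, hS₂ y]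
      exact smul_add_mpOp _ _ _ _ _

open QI in
/-- for special measure-and-prepare instruments, `R_I = R_M`. -/
theorem RI_eq_RM_special_measure_prepare {ι₁ ι₂ n : Type*}
    [Fintype ι₁] [DecidableEq ι₁] [Fintype ι₂] [DecidableEq ι₂]
    [Fintype n] [DecidableEq n]
    (A₁ : ι₁ → Matrix n n ℂ) (A₂ : ι₂ → Matrix n n ℂ)
    (hA₁ : IsPOVM A₁) (hA₂ : IsPOVM A₂)
    (S₁ : Instrument ι₁ n ι₁)
    (hS₁ : ∀ x, S₁.op x = mpOp (A₁ x) (Matrix.single x x 1))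
    (S₂ : Instrument ι₂ n ι₂)
    (hS₂ : ∀ y, S₂.op y = mpOp (A₂ y) (Matrix.single y y 1)) :
    RI S₁ S₂ = RM A₁ A₂ :=
  RI_eq_RM_special_measure_prepare_general A₁ A₂ S₁ hS₁ S₂ hS₂
end
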